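/- arXiv:2404.16204 — 2 statements merged into one kernel-verified Lean document; each statement's English description precedes it below -/
import Mathlib

section
/- (Pauli-x measurement at the center of a star graph, graph level.) Let W be a set of vertices, c ∈ W, let S be the star graph on W with center c, and let k ∈ W \ {c}. Then τ_k(τ_c(τ_k(S)) − c) is the star graph on W \ {c} with center k. -/
open SimpleGraph

universe u

/-- Local complementation of `G` at vertex `i`: adjacency is toggled exactly among
pairs of neighbors of `i`. -/
def localComp {V : Type u} (G : SimpleGraph V) (i : V) : SimpleGraph V where
  Adj a b := a ≠ b ∧
    ((G.Adj i a ∧ G.Adj i b) ∧ ¬ G.Adj a b ∨ ¬(G.Adj i a ∧ G.Adj i b) ∧ G.Adj a b)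
  symm := by
    constructor
    rintro a b ⟨hne, h⟩
    refine ⟨hne.symm, ?_⟩
    rcases h with ⟨⟨ha, hb⟩, hab⟩ | ⟨h1, h2⟩
    · exact Or.inl ⟨⟨hb, ha⟩, fun h => hab h.symm⟩
    · exact Or.inr ⟨fun h => h1 ⟨h.2, h.1⟩, h2.symm⟩
  loopless := ⟨fun a h => h.1 rfl⟩

/-- Vertex deletion `G − i`: remove every edge incident to `i` (the vertex stays,
isolated). -/
def delVert {V : Type u} (G : SimpleGraph V) (i : V) : SimpleGraph V where
  Adj a b := G.Adj a b ∧ a ≠ i ∧ b ≠ i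
  symm := ⟨fun _ _ ⟨h, ha, hb⟩ => ⟨h.symm, hb, ha⟩⟩
  loopless := ⟨fun a h => G.loopless.irrefl a h.1⟩

/-- Deletion of a set `Z` of vertices: remove every edge incident to a vertex of `Z`. -/
def delSet {V : Type u} (G : SimpleGraph V) (Z : Set V) : SimpleGraph V where
  Adj a b := G.Adj a b ∧ a ∉ Z ∧ b ∉ Z
  symm := ⟨fun _ _ ⟨h, ha, hb⟩ => ⟨h.symm, hb, ha⟩⟩
  loopless := ⟨fun a h => G.loopless.irrefl a h.1⟩

/-- Star graph on the set `W` with center `c`: edges are exactly the pairs `{c, u}`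
for `u ∈ W \ {c}`. -/
def starGraph {V : Type u} (W : Set V) (c : V) : SimpleGraph V :=
  SimpleGraph.fromRel (fun a b => a = c ∧ b ∈ W \ {c})

/-- Complete graph on the set `A`: edges are exactly all pairs of distinct elements
of `A`. -/
def completeOn {V : Type u} (A : Set V) : SimpleGraph V :=
  SimpleGraph.fromRel (fun a b => a ∈ A ∧ b ∈ A)

/-- Complete bipartite graph on parts `A` and `B`: edges are exactly the pairs
`{a, b}` with `a ∈ A` and `b ∈ B`. -/
def completeBipartiteOn {V : Type u} (A B : Set V) : SimpleGraph V :=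
  SimpleGraph.fromRel (fun a b => a ∈ A ∧ b ∈ B)

/-- Binary star graph `S(P1, P2, c1, c2)`: edges are exactly the pairs `{c1, u}`
with `u ∈ P2` together with the pairs `{u, c2}` with `u ∈ P1`. -/
def binaryStar {V : Type u} (P1 P2 : Set V) (c1 c2 : V) : SimpleGraph V :=
  SimpleGraph.fromRel (fun a b => (a = c1 ∧ b ∈ P2) ∨ (a ∈ P1 ∧ b = c2))

/-- The graph with the single edge `{c1, c2}`. -/
def singleEdge {V : Type u} (c1 c2 : V) : SimpleGraph V :=
  SimpleGraph.fromRel (fun a b => a = c1 ∧ b = c2)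

/-!
At the non-centre leaf `k` of the star local complementation does nothing, since `k` has the
single neighbour `c`. At the centre it completes the star into a clique, deleting `c` leaves a
clique on `W \ {c}`, and local complementation at any vertex of a clique turns it back into
the star centred there.
-/

section

variable {V : Type u}

@[simp]
lemma localComp_adj {G : SimpleGraph V} {i a b : V} :
    (localComp G i).Adj a b ↔ a ≠ b ∧
      ((G.Adj i a ∧ G.Adj i b) ∧ ¬G.Adj a b ∨ ¬(G.Adj i a ∧ G.Adj i b) ∧ G.Adj a b) :=
  Iff.rfl

@[simp]
lemma delVert_adj {G : SimpleGraph V} {i a b : V} :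
    (delVert G i).Adj a b ↔ G.Adj a b ∧ a ≠ i ∧ b ≠ i :=
  Iff.rfl

@[simp]
lemma starGraph_adj {W : Set V} {c a b : V} :
    (starGraph W c).Adj a b ↔ a ≠ b ∧ (a = c ∧ b ∈ W ∨ b = c ∧ a ∈ W) := by
  simp only [_root_.starGraph, fromRel_adj, Set.mem_sdiff, Set.mem_singleton_iff]
  constructor
  · rintro ⟨hab, ⟨rfl, hb, -⟩ | ⟨rfl, ha, -⟩⟩ <;> tauto
  · rintro ⟨hab, ⟨rfl, hb⟩ | ⟨rfl, ha⟩⟩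
    · exact ⟨hab, .inl ⟨rfl, hb, hab.symm⟩⟩
    · exact ⟨hab, .inr ⟨rfl, ha, hab⟩⟩

@[simp]
lemma completeOn_adj {A : Set V} {a b : V} :
    (completeOn A).Adj a b ↔ a ≠ b ∧ a ∈ A ∧ b ∈ A := by
  simp only [completeOn, fromRel_adj]
  tauto

lemma localComp_eq_self_of_subsingleton {G : SimpleGraph V} {i : V}
    (h : (G.neighborSet i).Subsingleton) : localComp G i = G := by
  have not_both : ∀ {a b}, a ≠ b → ¬(G.Adj i a ∧ G.Adj i b) :=
    fun hab hn => hab (h hn.1 hn.2)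
  ext a b
  constructor
  · rintro ⟨hab, ⟨hn, -⟩ | ⟨-, hadj⟩⟩
    · exact absurd hn (not_both hab)
    · exact hadj
  · exact fun hadj => ⟨hadj.ne, .inr ⟨not_both hadj.ne, hadj⟩⟩

lemma neighborSet_starGraph_of_ne {W : Set V} {c k : V} (hk : k ≠ c) :
    (starGraph W c).neighborSet k ⊆ {c} := by
  rintro u ⟨-, ⟨rfl, -⟩ | ⟨rfl, -⟩⟩
  exacts [absurd rfl hk, rfl]

lemma localComp_starGraph_of_ne {W : Set V} {c k : V} (hk : k ≠ c) :
    localComp (starGraph W c) k = starGraph W c :=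
  localComp_eq_self_of_subsingleton <|
    Set.subsingleton_singleton.anti (neighborSet_starGraph_of_ne hk)

lemma localComp_starGraph_center (W : Set V) (c : V) :
    localComp (starGraph W c) c = completeOn (insert c W) := by
  ext a b
  simp only [localComp_adj, _root_.starGraph_adj, completeOn_adj, Set.mem_insert_iff]
  by_cases hac : a = c <;> by_cases hbc : b = c <;> subst_vars <;> tauto

lemma delVert_completeOn (A : Set V) (c : V) :
    delVert (completeOn A) c = completeOn (A \ {c}) := by
  ext a b
  simp only [delVert_adj, completeOn_adj, Set.mem_sdiff, Set.mem_singleton_iff]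
  tauto

lemma localComp_completeOn {A : Set V} {k : V} (hk : k ∈ A) :
    localComp (completeOn A) k = starGraph A k := by
  ext a b
  simp only [localComp_adj, completeOn_adj, _root_.starGraph_adj]
  by_cases hak : a = k <;> by_cases hbk : b = k <;> subst_vars <;> tauto

end

theorem stmt_4_general {V : Type u} (W : Set V) (c : V)
    (k : V) (hk : k ∈ W \ {c}) :
    localComp (delVert (localComp (localComp (starGraph W c) k) c) c) k =
      starGraph (W \ {c}) k := by
  have hk' : k ∈ insert c W \ {c} := ⟨Set.mem_insert_of_mem c hk.1, hk.2⟩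
  rw [localComp_starGraph_of_ne hk.2, localComp_starGraph_center, delVert_completeOn,
    localComp_completeOn hk', Set.insert_sdiff_of_mem _ (Set.mem_singleton c)]

/-- Pauli-x measurement at the center of a star graph, graph level:
`τ_k(τ_c(τ_k(S)) − c)` is the star graph on `W \ {c}` with center `k`. -/
theorem stmt_4 {V : Type u} (W : Set V) (c : V) (hc : c ∈ W)
    (k : V) (hk : k ∈ W \ {c}) :
    localComp (delVert (localComp (localComp (starGraph W c) k) c) c) k =
      starGraph (W \ {c}) k :=
  stmt_4_general W c k hk
end

section
/- Let P1 and P2 be disjoint sets of vertices with c1 ∈ P1 and c2 ∈ P2, let S = S(P1, P2, c1, c2) be the binary star graph, and let w ∈ P2 \ {c2}. Let G' = S − (P2 \ {c2, w}) be obtained by deleting all vertices of P2 other than c2 and w. Then τ_{c1}(G') − c1 is the star graph on (P1 \ {c1}) ∪ {c2, w} with center c2. -/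
/-!
Deleting `P2 \ {c2, w}` from `S(P1, P2, c1, c2)` leaves the binary star `S(P1, {c2, w}, c1, c2)`.
There the neighbourhood of `c1` is exactly `{c2, w}`, an independent set, so `τ_{c1}` only adds
the edge `c2 w`. Removing `c1` then leaves the edges `u c2` for `u ∈ P1 \ {c1}` together with
`c2 w`: the star on `(P1 \ {c1}) ∪ {c2, w}` centred at `c2`.
-/

open SimpleGraph

universe u

variable {V : Type u}

theorem delSet_binaryStar {P1 P2 Z : Set V} {c1 c2 : V} (hP1 : Disjoint P1 Z)
    (hc1 : c1 ∉ Z) (hc2 : c2 ∉ Z) :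
    delSet (binaryStar P1 P2 c1 c2) Z = binaryStar P1 (P2 \ Z) c1 c2 := by
  ext a b
  have hZ : ∀ x ∈ P1, x ∉ Z := fun _ hx => Set.disjoint_left.mp hP1 hx
  simp only [delSet, binaryStar, fromRel_adj, Set.mem_sdiff]
  constructor
  · rintro ⟨⟨hab, (⟨rfl, hb⟩ | ⟨ha, rfl⟩) | (⟨rfl, ha⟩ | ⟨hb, rfl⟩)⟩, haZ, hbZ⟩ <;> tauto
  · rintro ⟨hab, (⟨rfl, hb, hbZ⟩ | ⟨ha, rfl⟩) | (⟨rfl, ha, haZ⟩ | ⟨hb, rfl⟩)⟩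
    · exact ⟨⟨hab, by tauto⟩, hc1, hbZ⟩
    · exact ⟨⟨hab, by tauto⟩, hZ a ha, hc2⟩
    · exact ⟨⟨hab, by tauto⟩, haZ, hc1⟩
    · exact ⟨⟨hab, by tauto⟩, hc2, hZ b hb⟩

theorem localComp_eq_sup_completeOn {G : SimpleGraph V} {i : V} {N : Set V}
    (hN : ∀ v, G.Adj i v ↔ v ∈ N) (hind : ∀ a ∈ N, ∀ b ∈ N, ¬ G.Adj a b) :
    localComp G i = G ⊔ completeOn N := by
  ext a b
  simp only [localComp, completeOn, sup_adj, fromRel_adj, hN]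
  by_cases hab : a ∈ N ∧ b ∈ N
  · have := hind a hab.1 b hab.2
    tauto
  · constructor
    · tauto
    · rintro (h | ⟨hne, h⟩)
      · exact ⟨h.ne, Or.inr ⟨hab, h⟩⟩
      · tauto

theorem binaryStar_adj_left_iff {P1 Q : Set V} {c1 c2 v : V} (hc1 : c1 ∉ Q) (hc2 : c2 ∈ Q) :
    (binaryStar P1 Q c1 c2).Adj c1 v ↔ v ∈ Q := by
  simp only [binaryStar, fromRel_adj]
  constructor
  · rintro ⟨-, (⟨-, hv⟩ | ⟨-, rfl⟩) | (⟨rfl, h⟩ | ⟨-, rfl⟩)⟩ <;> tauto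
  · rintro hv
    exact ⟨fun h => hc1 (h ▸ hv), Or.inl (Or.inl ⟨trivial, hv⟩)⟩

theorem binaryStar_not_adj_of_mem {P1 Q : Set V} {c1 c2 a b : V} (hdisj : Disjoint P1 Q)
    (hc1 : c1 ∉ Q) (ha : a ∈ Q) (hb : b ∈ Q) : ¬ (binaryStar P1 Q c1 c2).Adj a b := by
  have hQ : ∀ x ∈ Q, x ∉ P1 := fun x hx => Set.disjoint_right.mp hdisj hx
  simp only [binaryStar, fromRel_adj]
  rintro ⟨-, (⟨rfl, -⟩ | ⟨ha', -⟩) | (⟨rfl, -⟩ | ⟨hb', -⟩)⟩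
  · exact hc1 ha
  · exact hQ a ha ha'
  · exact hc1 hb
  · exact hQ b hb hb'

theorem localComp_binaryStar {P1 Q : Set V} {c1 c2 : V} (hdisj : Disjoint P1 Q)
    (hc1 : c1 ∉ Q) (hc2 : c2 ∈ Q) :
    localComp (binaryStar P1 Q c1 c2) c1 = binaryStar P1 Q c1 c2 ⊔ completeOn Q :=
  localComp_eq_sup_completeOn (fun _ => binaryStar_adj_left_iff hc1 hc2)
    fun _ ha _ hb => binaryStar_not_adj_of_mem hdisj hc1 ha hb

theorem delVert_binaryStar_sup_completeOn_pair {P1 : Set V} {c1 c2 w : V} (hc2 : c1 ≠ c2)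
    (hw : c1 ≠ w) :
    delVert (binaryStar P1 {c2, w} c1 c2 ⊔ completeOn {c2, w}) c1 =
      starGraph ((P1 \ {c1}) ∪ {c2, w}) c2 := by
  ext a b
  simp only [delVert, binaryStar, completeOn, _root_.starGraph, sup_adj, fromRel_adj, Set.mem_sdiff,
    Set.mem_union, Set.mem_insert_iff, Set.mem_singleton_iff]
  constructor
  · grind
  · rintro ⟨hab, ⟨rfl, (⟨hb, hbc1⟩ | rfl | rfl), -⟩ | ⟨rfl, (⟨ha, hac1⟩ | rfl | rfl), -⟩⟩ <;> grind

/-- with `G' = S − (P2 \ {c2, w})`, `τ_{c1}(G') − c1` is the star graph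
on `(P1 \ {c1}) ∪ {c2, w}` with center `c2`. -/
theorem stmt_9 {V : Type u} (P1 P2 : Set V) (hdisj : Disjoint P1 P2)
    (c1 c2 : V) (hc1 : c1 ∈ P1) (hc2 : c2 ∈ P2) (w : V) (hw : w ∈ P2 \ {c2}) :
    delVert (localComp (delSet (binaryStar P1 P2 c1 c2) (P2 \ {c2, w})) c1) c1 =
      starGraph ((P1 \ {c1}) ∪ {c2, w}) c2 := by
  have hc1P2 : c1 ∉ P2 := Set.disjoint_left.mp hdisj hc1
  have hpairP2 : {c2, w} ⊆ P2 := Set.insert_subset hc2 (Set.singleton_subset_iff.mpr hw.1)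
  have hc2pair : c2 ∈ ({c2, w} : Set V) := Set.mem_insert c2 {w}
  rw [delSet_binaryStar (hdisj.mono_right Set.sdiff_subset) (fun h => hc1P2 h.1)
      (fun h => h.2 hc2pair), Set.sdiff_sdiff_cancel_left hpairP2,
    localComp_binaryStar (hdisj.mono_right hpairP2) (fun h => hc1P2 (hpairP2 h)) hc2pair]
  exact delVert_binaryStar_sup_completeOn_pair (by rintro rfl; exact hc1P2 hc2)
    (by rintro rfl; exact hc1P2 hw.1)
end
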